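/- Let V be a vector space over ℚ, let N be a natural number, and let v₀, v₁, …, v_N ∈ V. If ∑_{i=0}^{N} a^i·(a+1)^{N−i}·v_i = 0 for every natural number a, then v_i = 0 for all i = 0, …, N. -/
import Mathlib

open Polynomial

/- STATEMENT 16: Vandermonde-type independence: if ∑_{i=0}^{N} a^i (a+1)^{N−i} v_i = 0 in a
ℚ-vector space V for every natural number a, then all v_i vanish. -/

theorem stmt_16 (V : Type*) [AddCommGroup V] [Module ℚ V] (N : ℕ) (v : Fin (N + 1) → V)
    (h : ∀ a : ℕ, ∑ i : Fin (N + 1), ((a : ℚ) ^ (i : ℕ) * ((a : ℚ) + 1) ^ (N - (i : ℕ))) • v i = 0) :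
    ∀ i, v i = 0 := by
  intro i₀
  rw [← Module.forall_dual_apply_eq_zero_iff ℚ]
  intro f
  set c : Fin (N+1) → ℚ := fun i => f (v i) with hc
  set p : ℚ[X] := ∑ i : Fin (N+1), Polynomial.C (c i) * ((X+1)^(N - (i:ℕ))) * X ^ (i:ℕ) with hp
  have hroot : ∀ a : ℕ, p.eval (a : ℚ) = 0 := by
    intro a
    have h2 := congrArg f (h a)
    simp only [map_sum, map_smul, smul_eq_mul, map_zero] at h2
    rw [hp, Polynomial.eval_finset_sum]
    rw [← h2]
    apply Finset.sum_congr rfl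
    intro i _
    simp [hc, mul_comm, mul_assoc, mul_left_comm]
  have hp0 : p = 0 := by
    apply Polynomial.eq_zero_of_infinite_isRoot
    apply Set.Infinite.mono (s := Set.range (fun n : ℕ => (n : ℚ)))
    · rintro _ ⟨n, rfl⟩; exact hroot n
    · exact Set.infinite_range_of_injective Nat.cast_injective
  have key : ∀ k : ℕ, ∀ hk : k < N + 1, c ⟨k, hk⟩ = 0 := by
    intro k
    induction k using Nat.strong_induction_on with
    | _ k ih =>
      intro hk
      have hco : p.coeff k = 0 := by rw [hp0]; simp
      rw [hp, Polynomial.finset_sum_coeff] at hco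
      have hterm : ∀ i : Fin (N+1),
          (Polynomial.C (c i) * ((X+1)^(N - (i:ℕ))) * X ^ (i:ℕ)).coeff k
          = if (i:ℕ) ≤ k then c i * ((X+1:ℚ[X])^(N - (i:ℕ))).coeff (k - (i:ℕ)) else 0 := by
        intro i
        rw [Polynomial.coeff_mul_X_pow', Polynomial.coeff_C_mul]
      rw [Finset.sum_congr rfl (fun i _ => hterm i)] at hco
      rw [Finset.sum_eq_single (⟨k, hk⟩ : Fin (N+1))] at hco
      · simp only [if_pos (le_refl k), Nat.sub_self] at hco
        have h1 : ((X+1:ℚ[X])^(N - k)).coeff 0 = 1 := by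
          rw [Polynomial.coeff_zero_eq_eval_zero]
          simp
        rw [h1, mul_one] at hco
        exact hco
      · intro i _ hne
        rcases lt_or_ge (i : ℕ) k with hlt | hge
        · rw [if_pos hlt.le, ih i hlt i.isLt]
          simp
        · have : ¬ ((i:ℕ) ≤ k) := by
            intro hle
            exact hne (Fin.ext (le_antisymm hle hge))
          rw [if_neg this]
      · intro habs
        exact absurd (Finset.mem_univ _) habs
  exact key i₀ i₀.isLt
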